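/- Let M ≥ 2 be an integer, let φ_p, θ_q ∈ (−π/2, π/2) with |sin φ_p| ≤ cos θ_q, and let φ, θ ∈ [−π/2, π/2]. Then the KPC beam factor satisfies |f_BF(φ,θ;φ_p,θ_q)| ≤ M², and equality |f_BF(φ,θ;φ_p,θ_q)| = M² holds if and only if φ = arcsin(sin φ_p / cos θ_q) and θ = θ_q. -/

import Mathlib

open Real Complex Finset

/-- The Dirichlet kernel `H_M(x) = (1/M) ∑_{m=0}^{M-1} exp(iπ m x)`. -/
noncomputable def dirichletKernel (M : ℕ) (x : ℝ) : ℂ :=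
  (1 / (M : ℂ)) * ∑ m ∈ Finset.range M, Complex.exp (Complex.I * (Real.pi : ℂ) * (m : ℂ) * (x : ℂ))

/-- The KPC beam factor
`f_BF(φ,θ;φ_p,θ_q) = M² H_M(cos θ sin φ − sin φ_p) H_M(sin θ − sin θ_q)`. -/
noncomputable def kpcFactor (M : ℕ) (φ θ φp θq : ℝ) : ℂ :=
  (M : ℂ) ^ 2 * dirichletKernel M (Real.cos θ * Real.sin φ - Real.sin φp) *
    dirichletKernel M (Real.sin θ - Real.sin θq)

/-! Each Dirichlet kernel is an average of unit complex numbers, so `‖H_M(x)‖ ≤ 1`.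
If `‖H_M(x)‖ = 1` and `M ≥ 2`, the triangle inequality is an equality, so the first two terms
`1` and `exp(iπx)` lie on the same ray and are equal; hence `x ∈ 2ℤ`. Both arguments of the
kernels in `f_BF` lie in `(-2, 2)`, so `|f_BF| = M²` forces both arguments to vanish, and the two
resulting equations `cos θ sin φ = sin φ_p`, `sin θ = sin θ_q` are solved by injectivity of `sin`
on `[-π/2, π/2]`. -/

lemma exp_I_pi_mul_natCast_mul (m : ℕ) (x : ℝ) :
    exp (I * π * m * x) = exp (I * π * x) ^ m := by
  rw [← Complex.exp_nat_mul]; ring_nf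

lemma norm_exp_I_pi_mul (x : ℝ) : ‖exp (I * π * x)‖ = 1 := by
  rw [show I * π * x = ((π * x : ℝ) : ℂ) * I by push_cast; ring, Complex.norm_exp_ofReal_mul_I]

lemma dirichletKernel_eq_geom_sum (M : ℕ) (x : ℝ) :
    dirichletKernel M x = (M : ℂ)⁻¹ * ∑ m ∈ range M, exp (I * π * x) ^ m := by
  simp only [dirichletKernel, exp_I_pi_mul_natCast_mul, one_div]

lemma norm_sum_pow_le_card {𝕜 : Type*} [NormedDivisionRing 𝕜] {w : 𝕜} (hw : ‖w‖ = 1)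
    (s : Finset ℕ) :
    ‖∑ m ∈ s, w ^ m‖ ≤ #s := by
  simpa [hw] using norm_sum_le s (w ^ ·)

lemma norm_dirichletKernel_le_one (M : ℕ) (x : ℝ) : ‖dirichletKernel M x‖ ≤ 1 := by
  rcases M.eq_zero_or_pos with rfl | hM
  · simp [dirichletKernel]
  rw [dirichletKernel_eq_geom_sum, norm_mul, norm_inv, Complex.norm_natCast,
    inv_mul_le_one₀ (by positivity)]
  simpa using norm_sum_pow_le_card (norm_exp_I_pi_mul x) (range M)

lemma dirichletKernel_zero {M : ℕ} (hM : M ≠ 0) : dirichletKernel M 0 = 1 := by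
  simp [dirichletKernel, hM]

lemma eq_one_of_norm_sum_range_pow_eq {w : ℂ} (hw : ‖w‖ = 1) {M : ℕ} (hM : 2 ≤ M)
    (h : ‖∑ m ∈ range M, w ^ m‖ = M) : w = 1 := by
  have hsplit : ∑ m ∈ range M, w ^ m = (1 + w) + ∑ m ∈ Ico 2 M, w ^ m := by
    rw [range_eq_Ico, ← sum_Ico_consecutive _ (by norm_num) hM]
    simp [sum_Ico_eq_sum_range, add_comm]
  have htail : ‖∑ m ∈ Ico 2 M, w ^ m‖ ≤ (M : ℝ) - 2 := by
    simpa [Nat.cast_sub hM] using norm_sum_pow_le_card hw (Ico 2 M)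
  have hsum : ‖1 + w‖ = ‖(1 : ℂ)‖ + ‖w‖ := by
    refine (norm_add_le _ _).antisymm ?_
    have := norm_add_le (1 + w) (∑ m ∈ Ico 2 M, w ^ m)
    rw [← hsplit, h] at this
    rw [norm_one, hw]
    linarith
  exact (eq_of_norm_eq_of_norm_add_eq (by rw [norm_one, hw]) hsum).symm

lemma eq_zero_of_exp_I_pi_mul_eq_one {x : ℝ} (hx : |x| < 2) (h : exp (I * π * x) = 1) :
    x = 0 := by
  obtain ⟨n, hn⟩ := Complex.exp_eq_one_iff.mp h
  have hπx : π * x = n * (2 * π) := by simpa using congrArg Complex.im hn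
  have hxn : x = 2 * n := mul_left_cancel₀ pi_ne_zero (by linarith)
  have hn0 : n = 0 := by
    rw [hxn, abs_mul, abs_two] at hx
    exact Int.abs_lt_one_iff.mp (by exact_mod_cast (by linarith : |(n : ℝ)| < 1))
  simp [hxn, hn0]

lemma norm_dirichletKernel_eq_one_iff {M : ℕ} (hM : 2 ≤ M) {x : ℝ} (hx : |x| < 2) :
    ‖dirichletKernel M x‖ = 1 ↔ x = 0 := by
  refine ⟨fun h ↦ eq_zero_of_exp_I_pi_mul_eq_one hx ?_, ?_⟩
  · refine eq_one_of_norm_sum_range_pow_eq (norm_exp_I_pi_mul x) hM ?_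
    have hM0 : (M : ℝ) ≠ 0 := by positivity
    rw [dirichletKernel_eq_geom_sum, norm_mul, norm_inv, Complex.norm_natCast,
      inv_mul_eq_one₀ hM0] at h
    exact h.symm
  · rintro rfl
    simp [dirichletKernel_zero (by omega : M ≠ 0)]

lemma norm_kpcFactor (M : ℕ) (φ θ φp θq : ℝ) :
    ‖kpcFactor M φ θ φp θq‖ =
      M ^ 2 * (‖dirichletKernel M (Real.cos θ * Real.sin φ - Real.sin φp)‖ *
        ‖dirichletKernel M (Real.sin θ - Real.sin θq)‖) := by
  simp only [kpcFactor, norm_mul, norm_pow, Complex.norm_natCast, mul_assoc]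

lemma mul_eq_one_iff_of_le_one {R : Type*} [CommRing R] [LinearOrder R] [IsStrictOrderedRing R]
    {a b : R} (ha₀ : 0 ≤ a) (ha : a ≤ 1) (hb₀ : 0 ≤ b) (hb : b ≤ 1) :
    a * b = 1 ↔ a = 1 ∧ b = 1 := by
  refine ⟨fun h ↦ ⟨by nlinarith, by nlinarith⟩, fun ⟨ha, hb⟩ ↦ by rw [ha, hb, mul_one]⟩

lemma abs_sin_lt_one_of_mem_Ioo {x : ℝ} (hx : x ∈ Set.Ioo (-(π / 2)) (π / 2)) :
    |Real.sin x| < 1 := by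
  have := cos_pos_of_mem_Ioo hx
  rw [← sq_lt_one_iff_abs_lt_one, Real.sin_sq]
  linarith [pow_pos this 2]

lemma abs_sub_lt_two {a b : ℝ} (ha : |a| ≤ 1) (hb : |b| < 1) : |a - b| < 2 :=
  (abs_sub _ _).trans_lt (by linarith)

lemma kpcFactor_args_eq_zero_iff {φp θq φ θ : ℝ} (hθq : θq ∈ Set.Ioo (-(π / 2)) (π / 2))
    (hle : |Real.sin φp| ≤ Real.cos θq)
    (hφ : φ ∈ Set.Icc (-(π / 2)) (π / 2)) (hθ : θ ∈ Set.Icc (-(π / 2)) (π / 2)) :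
    (Real.cos θ * Real.sin φ - Real.sin φp = 0 ∧ Real.sin θ - Real.sin θq = 0) ↔
      (φ = arcsin (Real.sin φp / Real.cos θq) ∧ θ = θq) := by
  have hcos : 0 < Real.cos θq := cos_pos_of_mem_Ioo hθq
  have hθ_iff : Real.sin θ - Real.sin θq = 0 ↔ θ = θq := by
    rw [sub_eq_zero]
    exact injOn_sin.eq_iff hθ (Set.Ioo_subset_Icc_self hθq)
  have hφ_iff : Real.cos θq * Real.sin φ - Real.sin φp = 0 ↔
      φ = arcsin (Real.sin φp / Real.cos θq) := by
    have hr : |Real.sin φp / Real.cos θq| ≤ 1 := by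
      rw [abs_div, abs_of_pos hcos]
      exact div_le_one_of_le₀ hle hcos.le
    rw [sub_eq_zero, mul_comm, ← eq_div_iff hcos.ne']
    constructor
    · intro h; rw [← h, arcsin_sin hφ.1 hφ.2]
    · intro h; rw [h, sin_arcsin (abs_le.mp hr).1 (abs_le.mp hr).2]
  constructor
  · rintro ⟨h1, h2⟩
    obtain rfl := hθ_iff.mp h2
    exact ⟨hφ_iff.mp h1, rfl⟩
  · rintro ⟨h1, rfl⟩
    exact ⟨hφ_iff.mpr h1, sub_self _⟩

/-- For `M ≥ 2`, `φ_p, θ_q ∈ (−π/2, π/2)` with `|sin φ_p| ≤ cos θ_q`, and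
`φ, θ ∈ [−π/2, π/2]`, the KPC beam factor satisfies `|f_BF| ≤ M²`, with equality iff
`φ = arcsin (sin φ_p / cos θ_q)` and `θ = θ_q`. -/
theorem abs_kpcFactor_le_max (M : ℕ) (hM : 2 ≤ M) (φp θq φ θ : ℝ)
    (hφp : φp ∈ Set.Ioo (-(Real.pi / 2)) (Real.pi / 2))
    (hθq : θq ∈ Set.Ioo (-(Real.pi / 2)) (Real.pi / 2))
    (hle : |Real.sin φp| ≤ Real.cos θq)
    (hφ : φ ∈ Set.Icc (-(Real.pi / 2)) (Real.pi / 2))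
    (hθ : θ ∈ Set.Icc (-(Real.pi / 2)) (Real.pi / 2)) :
    ‖kpcFactor M φ θ φp θq‖ ≤ (M : ℝ) ^ 2 ∧
      (‖kpcFactor M φ θ φp θq‖ = (M : ℝ) ^ 2 ↔
        φ = Real.arcsin (Real.sin φp / Real.cos θq) ∧ θ = θq) := by
  set x₁ := Real.cos θ * Real.sin φ - Real.sin φp
  set x₂ := Real.sin θ - Real.sin θq
  have hM₀ : (0 : ℝ) < (M : ℝ) ^ 2 := by positivity
  have hH₁ := norm_dirichletKernel_le_one M x₁
  have hH₂ := norm_dirichletKernel_le_one M x₂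
  have hx₁ : |x₁| < 2 := abs_sub_lt_two (by
    rw [abs_mul]
    exact mul_le_one₀ (abs_cos_le_one θ) (abs_nonneg _) (abs_sin_le_one φ))
    (abs_sin_lt_one_of_mem_Ioo hφp)
  have hx₂ : |x₂| < 2 := abs_sub_lt_two (abs_sin_le_one θ) (abs_sin_lt_one_of_mem_Ioo hθq)
  rw [norm_kpcFactor]
  refine ⟨mul_le_of_le_one_right hM₀.le (mul_le_one₀ hH₁ (norm_nonneg _) hH₂), ?_⟩
  rw [mul_eq_left₀ hM₀.ne', mul_eq_one_iff_of_le_one (norm_nonneg _) hH₁ (norm_nonneg _) hH₂,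
    norm_dirichletKernel_eq_one_iff hM hx₁, norm_dirichletKernel_eq_one_iff hM hx₂]
  exact kpcFactor_args_eq_zero_iff hθq hle hφ hθ
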